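/- arXiv:2106.05341 — 5 statements merged into one kernel-verified Lean document; each statement's English description precedes it below -/
import Mathlib

section
/- Let V : [T0, ∞) → ℝ be a continuously differentiable nonnegative function satisfying the differential inequality V'(t) + α·V(t) + β·V(t)^γ ≤ 0 for all t > T0, where α, β > 0 and 0 < γ < 1. Then V reaches zero at some time Ts with Ts ≤ T0 + (1/(α(1-γ)))·ln((α·V(T0)^(1-γ) + β)/β). -/
/-- Finite-time convergence lemma (Lemma 1 of the paper): if a nonnegative
continuous function `V` satisfies `V' + α V + β V^γ ≤ 0` for `t > T0`, then
`V` reaches zero at some time `Ts ≤ T0 + (1/(α(1-γ))) log((α V(T0)^(1-γ)+β)/β)`. -/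
theorem finite_time_convergence
    (α β γ T0 : ℝ) (hα : 0 < α) (hβ : 0 < β) (hγ0 : 0 < γ) (hγ1 : γ < 1)
    (V V' : ℝ → ℝ)
    (hVcont : ContinuousOn V (Set.Ici T0))
    (hVnonneg : ∀ t ∈ Set.Ici T0, 0 ≤ V t)
    (hVderiv : ∀ t, T0 < t → HasDerivAt V (V' t) t)
    (hineq : ∀ t, T0 < t → V' t + α * V t + β * (V t) ^ γ ≤ 0) :
    ∃ Ts, Ts ≤ T0 + (1 / (α * (1 - γ))) * Real.log ((α * (V T0) ^ (1 - γ) + β) / β) ∧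
      V Ts = 0 := by
  have h1γ : (0:ℝ) < 1 - γ := by linarith
  have hαγ : 0 < α * (1 - γ) := by positivity
  set L := (1 / (α * (1 - γ))) * Real.log ((α * (V T0) ^ (1 - γ) + β) / β) with hL
  by_cases h0 : V T0 = 0
  · refine ⟨T0, ?_, h0⟩
    have hLz : L = 0 := by
      rw [hL, h0, Real.zero_rpow h1γ.ne']
      simp [div_self hβ.ne']
    linarith
  · have hV0 : 0 < V T0 := lt_of_le_of_ne (hVnonneg T0 Set.self_mem_Ici) (Ne.symm h0)
    have hW0 : 0 < (V T0) ^ (1 - γ) := Real.rpow_pos_of_pos hV0 _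
    have hD0 : 0 < α * (V T0) ^ (1 - γ) + β := by positivity
    have harg : 1 ≤ (α * (V T0) ^ (1 - γ) + β) / β := by
      rw [le_div_iff₀ hβ]; nlinarith
    have hLpos : 0 ≤ L := mul_nonneg (by positivity) (Real.log_nonneg harg)
    set Ts := T0 + L with hTs
    have hT0Ts : T0 ≤ Ts := by linarith
    by_cases hz : ∃ t ∈ Set.Icc T0 Ts, V t = 0
    · obtain ⟨t, ht, hvt⟩ := hz
      exact ⟨t, ht.2, hvt⟩
    · exfalso
      push_neg at hz
      have hpos : ∀ t ∈ Set.Icc T0 Ts, 0 < V t := fun t ht =>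
        lt_of_le_of_ne (hVnonneg t ht.1) (Ne.symm (hz t ht))
      set H : ℝ → ℝ := fun t => Real.log (α * (V t) ^ (1 - γ) + β) + α * (1 - γ) * t with hH
      have hanti : AntitoneOn H (Set.Icc T0 Ts) := by
        have hint : interior (Set.Icc T0 Ts) = Set.Ioo T0 Ts := interior_Icc
        have hderivH : ∀ x ∈ Set.Ioo T0 Ts,
            HasDerivAt H (α * (V' x * ((1 - γ) * V x ^ (1 - γ - 1))) /
              (α * V x ^ (1 - γ) + β) + α * (1 - γ)) x := by
          intro x hx
          have hVx := hVderiv x hx.1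
          have hVxpos : 0 < V x := hpos x ⟨hx.1.le, hx.2.le⟩
          have hW : HasDerivAt (fun t => V t ^ (1 - γ))
              (V' x * ((1 - γ) * V x ^ (1 - γ - 1))) x := by
            have := hVx.rpow_const (p := 1 - γ) (Or.inl hVxpos.ne')
            convert this using 1; ring
          have hDpos : 0 < α * V x ^ (1 - γ) + β := by
            have := Real.rpow_pos_of_pos hVxpos (1 - γ); positivity
          have hlog : HasDerivAt (fun t => Real.log (α * V t ^ (1 - γ) + β))
              (α * (V' x * ((1 - γ) * V x ^ (1 - γ - 1))) / (α * V x ^ (1 - γ) + β)) x :=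
            ((hW.const_mul α).add_const β).log hDpos.ne'
          have hlin : HasDerivAt (fun t => α * (1 - γ) * t) (α * (1 - γ)) x := by
            simpa using (hasDerivAt_id x).const_mul (α * (1 - γ))
          exact hlog.add hlin
        apply antitoneOn_of_deriv_nonpos (convex_Icc _ _)
        · -- continuity of H
          have hWcont : ContinuousOn (fun t => (V t) ^ (1 - γ)) (Set.Icc T0 Ts) :=
            (hVcont.mono Set.Icc_subset_Ici_self).rpow_const (fun t _ => Or.inr h1γ.le)
          have hne : ∀ t ∈ Set.Icc T0 Ts, α * (V t) ^ (1 - γ) + β ≠ 0 := by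
            intro t ht
            have := Real.rpow_pos_of_pos (hpos t ht) (1 - γ)
            positivity
          exact (((continuousOn_const.mul hWcont).add continuousOn_const).log hne).add
            (continuous_const.mul continuous_id).continuousOn
        · intro x hx
          rw [hint] at hx
          exact (hderivH x hx).differentiableAt.differentiableWithinAt
        · intro x hx
          rw [hint] at hx
          rw [(hderivH x hx).deriv]
          have hVxpos : 0 < V x := hpos x ⟨hx.1.le, hx.2.le⟩
          have hWpos : 0 < V x ^ (1 - γ) := Real.rpow_pos_of_pos hVxpos _
          have hDpos : 0 < α * V x ^ (1 - γ) + β := by positivity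
          have hgpos : 0 < V x ^ γ := Real.rpow_pos_of_pos hVxpos _
          have hnegpos : 0 < V x ^ (-γ) := Real.rpow_pos_of_pos hVxpos _
          have hexp : V x ^ (1 - γ - 1) = V x ^ (-γ) := by norm_num
          have hkey : V' x * V x ^ (-γ) ≤ -(α * V x ^ (1 - γ) + β) := by
            have h1 : V' x ≤ -(α * V x + β * V x ^ γ) := by
              have := hineq x hx.1; linarith
            have h2 : V' x * V x ^ (-γ) ≤ -(α * V x + β * V x ^ γ) * V x ^ (-γ) :=
              mul_le_mul_of_nonneg_right h1 hnegpos.le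
            have h3 : V x * V x ^ (-γ) = V x ^ (1 - γ) := by
              nth_rewrite 1 [← Real.rpow_one (V x)]
              rw [← Real.rpow_add hVxpos]
              ring_nf
            have h4 : V x ^ γ * V x ^ (-γ) = 1 := by
              rw [← Real.rpow_add hVxpos]; simp
            calc V' x * V x ^ (-γ) ≤ -(α * V x + β * V x ^ γ) * V x ^ (-γ) := h2
              _ = -(α * (V x * V x ^ (-γ)) + β * (V x ^ γ * V x ^ (-γ))) := by ring
              _ = -(α * V x ^ (1 - γ) + β) := by rw [h3, h4]; ring
          rw [hexp]
          rw [div_add' _ _ _ hDpos.ne', div_nonpos_iff]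
          right
          refine ⟨?_, hDpos.le⟩
          nlinarith [mul_le_mul_of_nonneg_left hkey hαγ.le]
      have hHle : H Ts ≤ H T0 :=
        hanti ⟨le_rfl, hT0Ts⟩ ⟨hT0Ts, le_rfl⟩ hT0Ts
      have hVTs : 0 < V Ts := hpos Ts ⟨hT0Ts, le_rfl⟩
      have hWTs : 0 < (V Ts) ^ (1 - γ) := Real.rpow_pos_of_pos hVTs _
      have hDTs : 0 < α * (V Ts) ^ (1 - γ) + β := by positivity
      have hαL : α * (1 - γ) * L = Real.log ((α * (V T0) ^ (1 - γ) + β) / β) := by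
        rw [hL]; field_simp
      have hlogdiv : Real.log ((α * (V T0) ^ (1 - γ) + β) / β)
          = Real.log (α * (V T0) ^ (1 - γ) + β) - Real.log β :=
        Real.log_div hD0.ne' hβ.ne'
      have hlogle : Real.log (α * (V Ts) ^ (1 - γ) + β) ≤ Real.log β := by
        have : H Ts = Real.log (α * (V Ts) ^ (1 - γ) + β) + α * (1 - γ) * (T0 + L) := rfl
        simp only [hH] at hHle
        have expand : α * (1 - γ) * Ts = α * (1 - γ) * T0 + α * (1 - γ) * L := by
          rw [hTs]; ring
        rw [expand, hαL, hlogdiv] at hHle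
        linarith
      have := (Real.log_le_log_iff hDTs hβ).mp hlogle
      nlinarith
end

section
/- Let W : [T0, ∞) → ℝ be differentiable with W'(t) + a·W(t) + b ≤ 0 for all t > T0, where a, b > 0. If W(T0) ≥ 0, then W(t) ≤ 0 for all t ≥ T0 + (1/a)·ln((a·W(T0) + b)/b). -/
/-- Linear differential inequality: if `W' + a W + b ≤ 0` for `t > T0` with
`a, b > 0` and `W(T0) ≥ 0`, then `W(t) ≤ 0` for all
`t ≥ T0 + (1/a) log((a W(T0) + b)/b)`. -/
theorem linear_diff_ineq_reaches_zero
    (a b T0 : ℝ) (ha : 0 < a) (hb : 0 < b)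
    (W W' : ℝ → ℝ)
    (hWderiv : ∀ t ∈ Set.Ici T0, HasDerivAt W (W' t) t)
    (hineq : ∀ t, T0 < t → W' t + a * W t + b ≤ 0)
    (hW0 : 0 ≤ W T0) :
    ∀ t, T0 + (1 / a) * Real.log ((a * W T0 + b) / b) ≤ t → W t ≤ 0 := by
  set V : ℝ → ℝ := fun t => (W t + b / a) * Real.exp (a * t) with hV
  have hVderiv : ∀ t ∈ Set.Ici T0,
      HasDerivAt V ((W' t + a * W t + b) * Real.exp (a * t)) t := by
    intro t ht
    have h1 : HasDerivAt (fun t => W t + b / a) (W' t) t :=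
      (hWderiv t ht).add_const _
    have h2 : HasDerivAt (fun t => Real.exp (a * t)) (a * Real.exp (a * t)) t := by
      have := (Real.hasDerivAt_exp (a * t)).comp t ((hasDerivAt_id t).const_mul a)
      simpa [mul_comm, Function.comp_def] using this
    have := h1.mul h2
    refine this.congr_deriv ?_
    field_simp [ha.ne']
    ring
  have hanti : AntitoneOn V (Set.Ici T0) := by
    apply antitoneOn_of_deriv_nonpos (convex_Ici T0)
    · exact fun t ht => (hVderiv t ht).continuousAt.continuousWithinAt
    · intro t ht
      rw [interior_Ici] at ht
      exact (hVderiv t (Set.mem_Ici.mpr (le_of_lt ht))).differentiableAt.differentiableWithinAt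
    · intro t ht
      rw [interior_Ici] at ht
      rw [(hVderiv t (Set.mem_Ici.mpr (le_of_lt ht))).deriv]
      exact mul_nonpos_of_nonpos_of_nonneg (hineq t ht) (Real.exp_pos _).le
  intro t hT
  have hlog : 0 ≤ Real.log ((a * W T0 + b) / b) := by
    apply Real.log_nonneg
    rw [le_div_iff₀ hb]
    nlinarith
  have htT0 : T0 ≤ t := by
    have : 0 ≤ (1 / a) * Real.log ((a * W T0 + b) / b) :=
      mul_nonneg (by positivity) hlog
    linarith
  have hVle : V t ≤ V T0 := hanti (Set.self_mem_Ici) htT0 htT0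
  -- so (W t + b/a) ≤ (W T0 + b/a) * exp (a*(T0 - t))
  have hexp : Real.exp (a * (T0 - t)) ≤ b / (a * W T0 + b) := by
    have hpos : 0 < a * W T0 + b := by nlinarith
    have h1 : Real.log ((a * W T0 + b) / b) ≤ a * (t - T0) := by
      have := mul_le_mul_of_nonneg_left (by linarith : (1 / a) * Real.log ((a * W T0 + b) / b) ≤ t - T0) ha.le
      field_simp at this ⊢
      linarith [this]
    have h2 : a * (T0 - t) ≤ Real.log (b / (a * W T0 + b)) := by
      rw [Real.log_div hb.ne' hpos.ne']
      rw [Real.log_div hpos.ne' hb.ne'] at h1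
      linarith
    calc Real.exp (a * (T0 - t)) ≤ Real.exp (Real.log (b / (a * W T0 + b))) :=
          Real.exp_le_exp.mpr h2
      _ = b / (a * W T0 + b) := Real.exp_log (by positivity)
  have hpos : 0 < a * W T0 + b := by nlinarith
  have key : W t + b / a ≤ (W T0 + b / a) * Real.exp (a * (T0 - t)) := by
    have hVt : V t = (W t + b / a) * Real.exp (a * t) := rfl
    have hVT0 : V T0 = (W T0 + b / a) * Real.exp (a * T0) := rfl
    have hE : Real.exp (a * T0) = Real.exp (a * (T0 - t)) * Real.exp (a * t) := by
      rw [← Real.exp_add]; ring_nf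
    rw [hVt, hVT0, hE] at hVle
    have := (mul_le_mul_iff_left₀ (Real.exp_pos (a * t))).mp (by linarith [hVle] : (W t + b / a) * Real.exp (a * t) ≤ (W T0 + b / a) * Real.exp (a * (T0 - t)) * Real.exp (a * t))
    linarith [this]
  have hWT0nn : 0 ≤ W T0 + b / a := by positivity
  have : (W T0 + b / a) * Real.exp (a * (T0 - t)) ≤ (W T0 + b / a) * (b / (a * W T0 + b)) :=
    mul_le_mul_of_nonneg_left hexp hWT0nn
  have heq : (W T0 + b / a) * (b / (a * W T0 + b)) = b / a := by
    field_simp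
  linarith [key, this, heq ▸ this]
end

section
/- Under the dynamics V'(t) ≤ -a·V(t)^(1/2) - b·V(t) with a, b > 0 and V continuous nonnegative, V converges to zero in finite time Ts ≤ T0 + (2/b)·ln((b·V(T0)^(1/2) + a)/a), and V(t) = 0 for all t ≥ Ts. -/
open Set

private lemma stay_zero
    (a b T0 : ℝ) (ha : 0 < a) (hb : 0 < b)
    (V V' : ℝ → ℝ)
    (hVcont : ContinuousOn V (Set.Ici T0))
    (hVnonneg : ∀ t ∈ Set.Ici T0, 0 ≤ V t)
    (hVderiv : ∀ t, T0 < t → 0 < V t → HasDerivAt V (V' t) t)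
    (hineq : ∀ t, T0 < t → 0 < V t →
      V' t ≤ -a * Real.sqrt (V t) - b * V t)
    (s : ℝ) (hs : T0 ≤ s) (hVs : V s = 0) :
    ∀ t, s ≤ t → V t = 0 := by
  intro t hst
  rcases eq_or_lt_of_le hst with rfl | hlt
  · exact hVs
  by_contra hVt
  have hVtpos : 0 < V t := lt_of_le_of_ne (hVnonneg t (hs.trans hst)) (Ne.symm hVt)
  set Z : Set ℝ := Icc s t ∩ V ⁻¹' {0} with hZ
  have hIccsub : Icc s t ⊆ Ici T0 := fun r hr => hs.trans hr.1
  have hZclosed : IsClosed Z := by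
    have := (hVcont.mono hIccsub)
    exact this.preimage_isClosed_of_isClosed isClosed_Icc isClosed_singleton
  have hZcomp : IsCompact Z := isCompact_Icc.of_isClosed_subset hZclosed inter_subset_left
  have hZne : Z.Nonempty := ⟨s, ⟨le_refl s, le_of_lt hlt⟩, by simp [hVs]⟩
  have hmem := hZcomp.sSup_mem hZne
  set u := sSup Z with hu
  obtain ⟨⟨hsu, hut⟩, hVu'⟩ := hmem
  have hVu : V u = 0 := by simpa using hVu'
  have hult : u < t := hut.lt_of_ne (fun h => hVt (h ▸ hVu))
  have hpos : ∀ r ∈ Ioc u t, 0 < V r := by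
    intro r hr
    have hrIcc : r ∈ Icc s t := ⟨hsu.trans hr.1.le, hr.2⟩
    rcases (hVnonneg r (hIccsub hrIcc)).lt_or_eq with h | h
    · exact h
    · exfalso
      have hrZ : r ∈ Z := ⟨hrIcc, by simp [h.symm]⟩
      exact absurd (le_csSup hZcomp.bddAbove hrZ) (not_le.mpr hr.1)
  have hanti : StrictAntiOn V (Icc u t) := by
    apply strictAntiOn_of_deriv_neg (convex_Icc u t)
    · exact hVcont.mono fun r hr => (hs.trans hsu).trans hr.1
    · intro x hx
      rw [interior_Icc] at hx
      have hxpos : 0 < V x := hpos x ⟨hx.1, hx.2.le⟩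
      have hT0x : T0 < x := lt_of_le_of_lt (hs.trans hsu) hx.1
      rw [(hVderiv x hT0x hxpos).deriv]
      have h1 := hineq x hT0x hxpos
      nlinarith [Real.sqrt_pos.mpr hxpos, Real.sqrt_nonneg (V x)]
  have hlt2 := hanti ⟨le_refl u, hult.le⟩ ⟨hult.le, le_refl t⟩ hult
  rw [hVu] at hlt2
  linarith

/-- Lemma 1 of the paper with `γ = 1/2`: if `V' ≤ -a √V - b V`, then `V`
converges to zero in finite time `Ts ≤ T0 + (2/b) log((b √(V T0) + a)/a)`
and stays at zero afterwards. -/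
theorem finite_time_convergence_sqrt
    (a b T0 : ℝ) (ha : 0 < a) (hb : 0 < b)
    (V V' : ℝ → ℝ)
    (hVcont : ContinuousOn V (Set.Ici T0))
    (hVnonneg : ∀ t ∈ Set.Ici T0, 0 ≤ V t)
    (hVderiv : ∀ t, T0 < t → 0 < V t → HasDerivAt V (V' t) t)
    (hineq : ∀ t, T0 < t → 0 < V t →
      V' t ≤ -a * Real.sqrt (V t) - b * V t) :
    ∃ Ts, Ts ≤ T0 + (2 / b) * Real.log ((b * Real.sqrt (V T0) + a) / a) ∧
      ∀ t, Ts ≤ t → V t = 0 := by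
  set Ts := T0 + (2 / b) * Real.log ((b * Real.sqrt (V T0) + a) / a) with hTsdef
  have harg0 : 1 ≤ (b * Real.sqrt (V T0) + a) / a := by
    rw [le_div_iff₀ ha]
    nlinarith [Real.sqrt_nonneg (V T0)]
  have hT0Ts : T0 ≤ Ts := by
    have h1 : 0 ≤ Real.log ((b * Real.sqrt (V T0) + a) / a) := Real.log_nonneg harg0
    have h2 : 0 ≤ (2 / b) * Real.log ((b * Real.sqrt (V T0) + a) / a) :=
      mul_nonneg (by positivity) h1
    rw [hTsdef]; linarith
  refine ⟨Ts, le_refl _, ?_⟩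
  suffices h : ∃ r, T0 ≤ r ∧ r ≤ Ts ∧ V r = 0 by
    obtain ⟨r, hr1, hr2, hr3⟩ := h
    intro t ht
    exact stay_zero a b T0 ha hb V V' hVcont hVnonneg hVderiv hineq r hr1 hr3 t (hr2.trans ht)
  by_contra hcon
  push_neg at hcon
  have hpos : ∀ r ∈ Icc T0 Ts, 0 < V r := by
    intro r hr
    exact lt_of_le_of_ne (hVnonneg r hr.1) (Ne.symm (hcon r hr.1 hr.2))
  have hT0pos : 0 < V T0 := hpos T0 ⟨le_refl _, hT0Ts⟩
  set φ : ℝ → ℝ := fun t => (2 / b) * Real.log ((b * Real.sqrt (V t) + a) / a) + t with hφ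
  have hargpos : ∀ r ∈ Icc T0 Ts, 0 < (b * Real.sqrt (V r) + a) / a := by
    intro r hr
    have := Real.sqrt_nonneg (V r)
    positivity
  have hφcont : ContinuousOn φ (Icc T0 Ts) := by
    have hs : ContinuousOn (fun r => (b * Real.sqrt (V r) + a) / a) (Icc T0 Ts) :=
      (((continuousOn_const.mul
        ((hVcont.mono (Icc_subset_Ici_self)).sqrt)).add continuousOn_const).div_const a)
    exact (continuousOn_const.mul (hs.log (fun r hr => ne_of_gt (hargpos r hr)))).add
      continuousOn_id
  have hderiv : ∀ x ∈ Ioo T0 Ts,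
      HasDerivAt φ
        ((2 / b) * ((b * (V' x / (2 * Real.sqrt (V x))) / a) /
          ((b * Real.sqrt (V x) + a) / a)) + 1) x := by
    intro x hx
    have hxpos : 0 < V x := hpos x ⟨hx.1.le, hx.2.le⟩
    have h1 := (hVderiv x hx.1 hxpos).sqrt (ne_of_gt hxpos)
    have h2 := ((h1.const_mul b).add_const a).div_const a
    have h3 := h2.log (ne_of_gt (hargpos x ⟨hx.1.le, hx.2.le⟩))
    exact (h3.const_mul (2 / b)).add (hasDerivAt_id' (x := x))
  have hderiv_nonpos : ∀ x ∈ Ioo T0 Ts,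
      (2 / b) * ((b * (V' x / (2 * Real.sqrt (V x))) / a) /
        ((b * Real.sqrt (V x) + a) / a)) + 1 ≤ 0 := by
    intro x hx
    have hxpos : 0 < V x := hpos x ⟨hx.1.le, hx.2.le⟩
    set s0 := Real.sqrt (V x) with hs0
    have hs0pos : 0 < s0 := Real.sqrt_pos.mpr hxpos
    have hVx : V x = s0 * s0 := (Real.mul_self_sqrt hxpos.le).symm
    have hkey : V' x ≤ -a * s0 - b * (s0 * s0) := by
      rw [← hVx]; exact hineq x hx.1 hxpos
    have hD : 0 < s0 * (b * s0 + a) := by positivity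
    have heq : (2 / b) * ((b * (V' x / (2 * s0)) / a) / ((b * s0 + a) / a))
        = V' x / (s0 * (b * s0 + a)) := by
      field_simp
    rw [heq]
    have : V' x / (s0 * (b * s0 + a)) ≤ -1 := by
      rw [div_le_iff₀ hD]
      nlinarith
    linarith
  have hanti : AntitoneOn φ (Icc T0 Ts) := by
    apply antitoneOn_of_deriv_nonpos (convex_Icc T0 Ts) hφcont
    · intro x hx
      rw [interior_Icc] at hx
      exact ((hderiv x hx).differentiableAt).differentiableWithinAt
    · intro x hx
      rw [interior_Icc] at hx
      rw [(hderiv x hx).deriv]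
      exact hderiv_nonpos x hx
  have hφT0 : φ T0 = Ts := by simp [hφ, hTsdef]; ring
  have hφTs := hanti ⟨le_refl _, hT0Ts⟩ ⟨hT0Ts, le_refl _⟩ hT0Ts
  rw [hφT0] at hφTs
  -- φ Ts ≤ Ts, but φ Ts = (2/b) log(arg) + Ts with arg > 1
  have hTspos : 0 < V Ts := hpos Ts ⟨hT0Ts, le_refl _⟩
  have harg1 : 1 < (b * Real.sqrt (V Ts) + a) / a := by
    rw [lt_div_iff₀ ha]
    nlinarith [Real.sqrt_pos.mpr hTspos]
  have hlogpos : 0 < Real.log ((b * Real.sqrt (V Ts) + a) / a) := Real.log_pos harg1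
  have : 0 < (2 / b) * Real.log ((b * Real.sqrt (V Ts) + a) / a) :=
    mul_pos (by positivity) hlogpos
  have hφTsval : φ Ts = (2 / b) * Real.log ((b * Real.sqrt (V Ts) + a) / a) + Ts := rfl
  linarith [hφTs, hφTsval ▸ hφTs]
end

section
/- Let h : [0,∞) → ℝ be twice continuously differentiable and satisfy ḧ(t) + a₁·ḣ(t) + a₂·h(t) ≥ 0 for all t ≥ 0, where the roots of λ² + a₁λ + a₂ = 0 are real and negative, say λ² + a₁λ + a₂ = (λ - r₁)(λ - r₂) with r₁, r₂ < 0. If h(0) ≥ 0 and ḣ(0) - r₂·h(0) ≥ 0, then h(t) ≥ 0 for all t ≥ 0. -/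
/-- Grönwall-type lemma: if `f' ≥ c f` on `[0,∞)` and `f 0 ≥ 0` then `f ≥ 0` on `[0,∞)`. -/
lemma gronwall_nonneg (c : ℝ) (f f' : ℝ → ℝ)
    (hd : ∀ t, HasDerivAt f (f' t) t)
    (hge : ∀ t, 0 ≤ t → c * f t ≤ f' t) (h0 : 0 ≤ f 0) :
    ∀ t, 0 ≤ t → 0 ≤ f t := by
  set g : ℝ → ℝ := fun t => f t * Real.exp (-c * t) with hg
  have hgd : ∀ t, HasDerivAt g ((f' t - c * f t) * Real.exp (-c * t)) t := by
    intro t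
    have he : HasDerivAt (fun t => Real.exp (-c * t)) (Real.exp (-c * t) * (-c)) t := by
      simpa using ((hasDerivAt_id t).const_mul (-c)).exp
    have := (hd t).mul he
    refine this.congr_deriv ?_
    ring
  have hmono : MonotoneOn g (Set.Ici (0 : ℝ)) := by
    have hfc : Continuous f := continuous_iff_continuousAt.mpr fun t => (hd t).continuousAt
    apply monotoneOn_of_deriv_nonneg (convex_Ici 0)
      ((hfc.mul (Real.continuous_exp.comp (continuous_const.mul continuous_id))).continuousOn :
        ContinuousOn g (Set.Ici 0))
    · intro t ht
      exact ((hgd t).differentiableAt).differentiableWithinAt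
    · intro t ht
      rw [interior_Ici] at ht
      have hdg : deriv g t = (f' t - c * f t) * Real.exp (-c * t) := (hgd t).deriv
      rw [show (f * Real.exp ∘ ((fun x => -c) * id)) = g from rfl, hdg]
      have := hge t (le_of_lt ht)
      exact mul_nonneg (by linarith) (Real.exp_pos _).le
  intro t ht
  have := hmono (Set.self_mem_Ici) (Set.mem_Ici.mpr ht) ht
  have hg0 : 0 ≤ g 0 := by
    simp only [hg]
    positivity
  have hgt : 0 ≤ g t := le_trans hg0 this
  have hexp : 0 < Real.exp (-c * t) := Real.exp_pos _
  exact (mul_nonneg_iff_of_pos_right hexp).mp hgt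

/-- Relative-degree-two exponential CBF condition: if
`ḧ + a₁ ḣ + a₂ h ≥ 0` with characteristic roots `r₁, r₂ < 0`, `h(0) ≥ 0` and
`ḣ(0) - r₂ h(0) ≥ 0`, then `h(t) ≥ 0` for all `t ≥ 0`. -/
theorem second_order_cbf_invariance
    (a₁ a₂ r₁ r₂ : ℝ) (hr₁ : r₁ < 0) (hr₂ : r₂ < 0)
    (hfact : ∀ lam : ℝ, lam ^ 2 + a₁ * lam + a₂ = (lam - r₁) * (lam - r₂))
    (h h' h'' : ℝ → ℝ)
    (hder1 : ∀ t, HasDerivAt h (h' t) t)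
    (hder2 : ∀ t, HasDerivAt h' (h'' t) t)
    (hcont : Continuous h'')
    (hineq : ∀ t, 0 ≤ t → 0 ≤ h'' t + a₁ * h' t + a₂ * h t)
    (h0 : 0 ≤ h 0) (hv0 : 0 ≤ h' 0 - r₂ * h 0) :
    ∀ t, 0 ≤ t → 0 ≤ h t := by
  have ha₂ : a₂ = r₁ * r₂ := by have := hfact 0; nlinarith [this]
  have ha₁ : a₁ = -(r₁ + r₂) := by have := hfact 1; nlinarith [this]
  -- ψ = h' - r₂ h satisfies ψ' ≥ r₁ ψ
  have hψ : ∀ t, 0 ≤ t → 0 ≤ h' t - r₂ * h t := by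
    apply gronwall_nonneg r₁ (fun t => h' t - r₂ * h t) (fun t => h'' t - r₂ * h' t)
    · intro t
      exact (hder2 t).sub ((hder1 t).const_mul r₂)
    · intro t ht
      have := hineq t ht
      have key : h'' t - r₂ * h' t - r₁ * (h' t - r₂ * h t)
          = h'' t + a₁ * h' t + a₂ * h t := by rw [ha₁, ha₂]; ring
      linarith
    · exact hv0
  -- now h' ≥ r₂ h gives h ≥ 0
  apply gronwall_nonneg r₂ h h' hder1
  · intro t ht
    have := hψ t ht
    linarith
  · exact h0
end

section
/- For the double integrator ṗ = v, v̇ = u in ℝ² with ‖u‖∞ ≤ ū, the function h(p, v) along the relative state between two agents given by h = √(2(ū_i + ū_j)(‖Δp‖ - D_s)) - Δpᵀ·Δv/‖Δp‖ is well-defined and real-valued whenever ‖Δp‖ > D_s, and h ≥ 0 implies that under maximum braking deceleration ū_i + ū_j applied along Δp, the distance ‖Δp‖ never falls below D_s (in the 1-D projection model where the relative position d(t) satisfies d̈ = ū_i + ū_j, d(0) = ‖Δp‖, ḋ(0) = Δpᵀ·Δv/‖Δp‖). -/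
/-- Double-integrator braking CBF: with `Δp, Δv ∈ ℝ²`, `‖Δp‖ > D_s`,
`ḋ(0) = ⟪Δp, Δv⟫/‖Δp‖`, the barrier value
`h = √(2(ū_i+ū_j)(‖Δp‖-D_s)) + ḋ(0) ≥ 0` implies that along the 1-D braking
trajectory `d(t) = ‖Δp‖ + ḋ(0) t + ((ū_i+ū_j)/2) t²` (i.e. `d̈ = ū_i + ū_j`),
the distance stays above `D_s` until the relative velocity reaches zero. -/
theorem braking_cbf_safety
    (ubar_i ubar_j Ds : ℝ) (hui : 0 < ubar_i) (huj : 0 < ubar_j) (hDs : 0 < Ds)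
    (Δp Δv : EuclideanSpace ℝ (Fin 2))
    (hdist : Ds < ‖Δp‖)
    (d0' : ℝ) (hd0' : d0' = inner ℝ Δp Δv / ‖Δp‖)
    (d : ℝ → ℝ)
    (hd : ∀ t, d t = ‖Δp‖ + d0' * t + ((ubar_i + ubar_j) / 2) * t ^ 2)
    (hbarrier : 0 ≤ Real.sqrt (2 * (ubar_i + ubar_j) * (‖Δp‖ - Ds)) + d0') :
    ∀ t, 0 ≤ t → t ≤ -d0' / (ubar_i + ubar_j) → Ds ≤ d t := by

  intro t ht hle
  have hu : 0 < ubar_i + ubar_j := by linarith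
  rw [hd]
  rcases le_or_gt d0' 0 with h0 | h0
  · have hs : 0 ≤ 2 * (ubar_i + ubar_j) * (‖Δp‖ - Ds) := by nlinarith
    have hsq : Real.sqrt (2 * (ubar_i + ubar_j) * (‖Δp‖ - Ds)) ^ 2
        = 2 * (ubar_i + ubar_j) * (‖Δp‖ - Ds) := Real.sq_sqrt hs
    have hd2 : d0' ^ 2 ≤ 2 * (ubar_i + ubar_j) * (‖Δp‖ - Ds) := by
      nlinarith [Real.sqrt_nonneg (2 * (ubar_i + ubar_j) * (‖Δp‖ - Ds))]
    have ht' : (ubar_i + ubar_j) * t + d0' ≤ 0 := by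
      have := (le_div_iff₀ hu).mp hle
      linarith [mul_comm t (ubar_i + ubar_j)]
    nlinarith [sq_nonneg ((ubar_i + ubar_j) * t + d0')]
  · exfalso
    have : -d0' / (ubar_i + ubar_j) < 0 := by
      apply div_neg_of_neg_of_pos <;> linarith
    linarith
end
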